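/- Let G = ℤ₄ = ⟨x⟩. The 2-Cayley digraph Γ = Cay(G,(T_{i,j})_{2×2}) with T_{1,2} = {1, x}, T_{2,1} = {x²}, and T_{1,1} = T_{2,2} = ∅ is an oriented bipartite digraph whose automorphism group is isomorphic to ℤ₄ and acts semiregularly with the two orbits G×{1}, G×{2}. -/

import Mathlib

/-- Arc relation of the 2-Cayley digraph with `T₁₂ = S`, `T₂₁ = T`,
`T₁₁ = T₂₂ = ∅`, on vertex set `G × Fin 2`. -/
def cay2Arc {G : Type*} [Group G] (S T : Set G) (u v : G × Fin 2) : Prop :=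
  (u.2 = 0 ∧ v.2 = 1 ∧ ∃ s ∈ S, v.1 = s * u.1) ∨
    (u.2 = 1 ∧ v.2 = 0 ∧ ∃ t ∈ T, v.1 = t * u.1)

/-- The automorphism group of the digraph with arc relation `Arc`. -/
def autSubgroup {V : Type*} (Arc : V → V → Prop) : Subgroup (Equiv.Perm V) where
  carrier := {σ | ∀ u v, Arc u v ↔ Arc (σ u) (σ v)}
  one_mem' := fun _ _ => Iff.rfl
  mul_mem' := by
    intro σ τ hσ hτ u v
    simpa using (hτ u v).trans (hσ (τ u) (τ v))
  inv_mem' := by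
    intro σ hσ u v
    simpa using (hσ (σ⁻¹ u) (σ⁻¹ v)).symm

namespace Stmt14

abbrev M := Multiplicative (ZMod 4)
abbrev V := M × Fin 2

def x₀ : M := Multiplicative.ofAdd 1
def S₀ : Set M := {1, x₀}
def T₀ : Set M := {x₀ ^ 2}

/-- Decidable concrete form of the arc relation. -/
def ArcD (u v : V) : Prop :=
  (u.2 = 0 ∧ v.2 = 1 ∧ (v.1 = u.1 ∨ v.1 = x₀ * u.1)) ∨
  (u.2 = 1 ∧ v.2 = 0 ∧ v.1 = x₀ ^ 2 * u.1)

instance (u v : V) : Decidable (ArcD u v) := by unfold ArcD; infer_instance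

lemma arc_iff (u v : V) : cay2Arc S₀ T₀ u v ↔ ArcD u v := by
  simp [cay2Arc, S₀, T₀, ArcD]

/-- "Successor": an out-neighbour lying on a directed 4-cycle. -/
def SuccD (u v : V) : Prop := ArcD u v ∧ ∃ a b, ArcD v a ∧ ArcD a b ∧ ArcD b u

instance (u v : V) : Decidable (SuccD u v) := by unfold SuccD; infer_instance

lemma succ_uniq : ∀ u v w : V, SuccD u v → SuccD u w → v = w := by decide
lemma s01 : ∀ g : M, SuccD (g,0) (g,1) := by decide
lemma s10 : ∀ g : M, SuccD (g,1) (x₀*(x₀*g),0) := by decide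
lemma arcx : ∀ g : M, ArcD (g,0) (x₀*g,1) := by decide
lemma out0 : ∀ (g : M) (v : V), ArcD (g,0) v → v = (g,1) ∨ v = (x₀*g,1) := by decide
lemma nex : ∀ g : M, x₀*g ≠ g := by decide
lemma x5 : ∀ g : M, x₀*(x₀*(x₀*(x₀*(x₀*g)))) = x₀*g := by decide
lemma cover : ∀ g h : M, h = g ∨ h = x₀*g ∨ h = x₀*(x₀*g) ∨ h = x₀*(x₀*(x₀*g)) := by decide
lemma cover2 : ∀ i : Fin 2, i = 0 ∨ i = 1 := by decide
lemma layer_char : ∀ u : V, u.2 = 0 ↔ ∃ v w, v ≠ w ∧ ArcD u v ∧ ArcD u w := by decide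
lemma transArc : ∀ (k : M) (u v : V), ArcD u v ↔ ArcD (u.1*k, u.2) (v.1*k, v.2) := by decide

lemma aut_arcD {σ : Equiv.Perm V} (hσ : σ ∈ autSubgroup (cay2Arc S₀ T₀)) :
    ∀ u v, ArcD u v ↔ ArcD (σ u) (σ v) := by
  intro u v
  rw [← arc_iff, ← arc_iff]
  exact hσ u v

lemma aut_succD {σ : Equiv.Perm V} (hσ : σ ∈ autSubgroup (cay2Arc S₀ T₀)) :
    ∀ u v, SuccD u v → SuccD (σ u) (σ v) := by
  rintro u v ⟨h1, a, b, h2, h3, h4⟩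
  have hA := aut_arcD hσ
  exact ⟨(hA u v).1 h1, σ a, σ b, (hA v a).1 h2, (hA a b).1 h3, (hA b u).1 h4⟩

lemma fsucc {σ : Equiv.Perm V} (hσ : σ ∈ autSubgroup (cay2Arc S₀ T₀)) {u v : V}
    (hu : σ u = u) (huv : SuccD u v) : σ v = v := by
  have h := aut_succD hσ u v huv
  rw [hu] at h
  exact succ_uniq u (σ v) v h huv

lemma layer {σ : Equiv.Perm V} (hσ : σ ∈ autSubgroup (cay2Arc S₀ T₀)) (p : V) :
    (σ p).2 = p.2 := by
  have hA := aut_arcD hσ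
  have hP : (∃ v w, v ≠ w ∧ ArcD p v ∧ ArcD p w) ↔
      (∃ v w, v ≠ w ∧ ArcD (σ p) v ∧ ArcD (σ p) w) := by
    constructor
    · rintro ⟨v, w, hvw, h1, h2⟩
      exact ⟨σ v, σ w, fun h => hvw (σ.injective h), (hA p v).1 h1, (hA p w).1 h2⟩
    · rintro ⟨v, w, hvw, h1, h2⟩
      refine ⟨σ⁻¹ v, σ⁻¹ w, fun h => hvw ?_, ?_, ?_⟩
      · have := congrArg σ h
        simpa using this
      · exact (hA p (σ⁻¹ v)).2 (by rw [← Equiv.Perm.mul_apply, mul_inv_cancel, Equiv.Perm.one_apply]; exact h1)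
      · exact (hA p (σ⁻¹ w)).2 (by rw [← Equiv.Perm.mul_apply, mul_inv_cancel, Equiv.Perm.one_apply]; exact h2)
  by_cases hp : p.2 = 0
  · rw [hp]
    exact (layer_char (σ p)).2 (hP.1 ((layer_char p).1 hp))
  · have h1 : (σ p).2 ≠ 0 := fun h =>
      hp ((layer_char p).2 (hP.2 ((layer_char (σ p)).1 h)))
    rcases cover2 p.2 with h | h
    · exact absurd h hp
    · rcases cover2 (σ p).2 with h' | h'
      · exact absurd h' h1
      · rw [h, h']

lemma fnext {σ : Equiv.Perm V} (hσ : σ ∈ autSubgroup (cay2Arc S₀ T₀)) (h : M)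
    (h0 : σ (h,0) = (h,0)) (h1 : σ (h,1) = (h,1)) : σ (x₀*h,1) = (x₀*h,1) := by
  have ha : ArcD (σ (h,0)) (σ (x₀*h,1)) := (aut_arcD hσ _ _).1 (arcx h)
  rw [h0] at ha
  rcases out0 h _ ha with he | he
  · exact absurd (congrArg Prod.fst (σ.injective (he.trans h1.symm))) (nex h)
  · exact he

lemma fix0 {σ : Equiv.Perm V} (hσ : σ ∈ autSubgroup (cay2Arc S₀ T₀)) {g : M}
    (hg : σ (g, 0) = (g, 0)) : ∀ q : V, σ q = q := by
  have f1 : σ (g,1) = (g,1) := fsucc hσ hg (s01 g)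
  have f2 : σ (x₀*g,1) = (x₀*g,1) := fnext hσ g hg f1
  have f3 : σ (x₀*(x₀*g),0) = (x₀*(x₀*g),0) := fsucc hσ f1 (s10 g)
  have f4 : σ (x₀*(x₀*(x₀*g)),0) = (x₀*(x₀*(x₀*g)),0) := fsucc hσ f2 (s10 (x₀*g))
  have f5 : σ (x₀*(x₀*g),1) = (x₀*(x₀*g),1) := fsucc hσ f3 (s01 (x₀*(x₀*g)))
  have f6 : σ (x₀*(x₀*(x₀*g)),1) = (x₀*(x₀*(x₀*g)),1) := fnext hσ _ f3 f5
  have f7 : σ (x₀*(x₀*(x₀*(x₀*(x₀*g)))),0) = (x₀*(x₀*(x₀*(x₀*(x₀*g)))),0) :=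
    fsucc hσ f6 (s10 (x₀*(x₀*(x₀*g))))
  rw [x5 g] at f7
  rintro ⟨h, i⟩
  rcases cover g h with rfl | rfl | rfl | rfl <;>
    rcases cover2 i with rfl | rfl <;> assumption

lemma semireg {σ : Equiv.Perm V} (hσ : σ ∈ autSubgroup (cay2Arc S₀ T₀))
    (hfix : ∃ p, σ p = p) : σ = 1 := by
  obtain ⟨⟨h, i⟩, hp⟩ := hfix
  have key : ∀ q : V, σ q = q := by
    rcases cover2 i with rfl | rfl
    · exact fix0 hσ hp
    · exact fix0 hσ (fsucc hσ hp (s10 h))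
  exact Equiv.ext key

/-- Right translations as automorphisms. -/
def φ : M →* ↥(autSubgroup (cay2Arc S₀ T₀)) where
  toFun k := ⟨Equiv.prodCongr (Equiv.mulRight k) (Equiv.refl (Fin 2)), by
    intro u v
    simp only [arc_iff]
    exact transArc k u v⟩
  map_one' := by
    apply Subtype.ext
    apply Equiv.ext
    rintro ⟨h, i⟩
    show (h * 1, i) = (h, i)
    rw [mul_one]
  map_mul' := by
    intro k l
    apply Subtype.ext
    apply Equiv.ext
    rintro ⟨h, i⟩
    show (h * (k * l), i) = ((h * l) * k, i)
    rw [mul_comm k l, mul_assoc]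

lemma φ_app (k : M) (q : V) : (↑(φ k) : Equiv.Perm V) q = (q.1 * k, q.2) := rfl

lemma φ_inj : Function.Injective φ := by
  intro k l hkl
  have := congrArg (fun σ : ↥(autSubgroup (cay2Arc S₀ T₀)) =>
    ((σ : Equiv.Perm V) ((1 : M), (0 : Fin 2))).1) hkl
  simpa [φ_app] using this

lemma φ_surj : Function.Surjective φ := by
  rintro ⟨σ, hσ⟩
  refine ⟨(σ (1,0)).1, ?_⟩
  have h2 : (σ ((1 : M), (0 : Fin 2))).2 = 0 := layer hσ (1,0)
  have hfix : ((φ ((σ (1,0)).1)⁻¹ * ⟨σ, hσ⟩ : ↥(autSubgroup (cay2Arc S₀ T₀))) :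
      Equiv.Perm V) (1,0) = (1,0) := by
    show (↑(φ ((σ (1,0)).1)⁻¹) : Equiv.Perm V) (σ (1,0)) = (1,0)
    rw [φ_app]
    rw [h2]
    simp
  have h1 : φ ((σ (1,0)).1)⁻¹ * ⟨σ, hσ⟩ = 1 := by
    apply Subtype.ext
    exact semireg (φ ((σ (1,0)).1)⁻¹ * ⟨σ, hσ⟩ : ↥(autSubgroup (cay2Arc S₀ T₀))).2
      ⟨(1,0), hfix⟩
  have h3 := mul_eq_one_iff_inv_eq.mp h1
  rw [← map_inv, inv_inv] at h3
  exact h3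

lemma disj : S₀ ∩ T₀⁻¹ = ∅ := by
  ext a
  simp only [Set.mem_inter_iff, Set.mem_empty_iff_false, iff_false, Set.mem_inv, S₀, T₀,
    Set.mem_insert_iff, Set.mem_singleton_iff]
  revert a
  decide

end Stmt14

open Stmt14 in
/-- The 2-Cayley digraph of `ℤ₄` with `T₁₂ = {1, x}`, `T₂₁ = {x²}` is an
oriented bipartite digraph whose automorphism group is `ℤ₄` acting
semiregularly with the two orbits `G × {1}`, `G × {2}`. -/
theorem stmt_14 :
    let x : Multiplicative (ZMod 4) := Multiplicative.ofAdd 1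
    let S : Set (Multiplicative (ZMod 4)) := {1, x}
    let T : Set (Multiplicative (ZMod 4)) := {x ^ 2}
    let Arc := cay2Arc S T
    S ∩ T⁻¹ = ∅ ∧
      Nonempty (autSubgroup Arc ≃* Multiplicative (ZMod 4)) ∧
      (∀ σ ∈ autSubgroup Arc, (∃ p, σ p = p) → σ = 1) ∧
      (∀ σ ∈ autSubgroup Arc, ∀ p : Multiplicative (ZMod 4) × Fin 2,
        (σ p).2 = p.2) ∧
      (∀ (g h : Multiplicative (ZMod 4)) (i : Fin 2),
        ∃ σ ∈ autSubgroup Arc, σ (g, i) = (h, i)) := by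
  intro x S T Arc
  have hS : S = S₀ := rfl
  have hT : T = T₀ := rfl
  have hArc : Arc = cay2Arc S₀ T₀ := rfl
  rw [hS, hT, hArc]
  refine ⟨disj, ⟨(MulEquiv.ofBijective φ ⟨φ_inj, φ_surj⟩).symm⟩,
    fun σ hσ hp => semireg hσ hp, fun σ hσ p => layer hσ p, fun g h i => ?_⟩
  refine ⟨↑(φ (g⁻¹ * h)), (φ (g⁻¹ * h)).2, ?_⟩
  rw [φ_app]
  simp
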